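/- Let N ≥ 0 and 0 ≤ j < i ≤ N be integers, and let p be a real polynomial of degree at most i such that ∫_{−1}^{1} ((1−c)/2)^{2N+3−2i} · p(c) · r(c) dc = 0 for every real polynomial r of degree strictly less than i. Then for every real polynomial q of degree at most j, ∫_{−1}^{1} ((1−c)/2)^{2+(N−i)+(N−j)} · p(c) · q(c) dc = 0. -/

import Mathlib

open Polynomial

theorem integral_mul_eval_mul_eq_zero_of_forall_degree_lt {w : ℝ → ℝ} {a b : ℝ} {p s q : ℝ[X]}
    {n m k : ℕ}
    (horth : ∀ r : ℝ[X], r.degree < n → ∫ c in a..b, w c * p.eval c * r.eval c = 0)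
    (hs : s.degree ≤ m) (hq : q.degree ≤ k) (hmkn : m + k < n) :
    ∫ c in a..b, w c * s.eval c * p.eval c * q.eval c = 0 := by
  have hsq : (s * q).degree < n :=
    calc (s * q).degree ≤ s.degree + q.degree := degree_mul_le s q
      _ ≤ (m + k : ℕ) := by push_cast; exact add_le_add hs hq
      _ < n := by exact_mod_cast hmkn
  rw [← horth (s * q) hsq]
  refine intervalIntegral.integral_congr fun c _ ↦ ?_
  simp only [eval_mul]
  ring

theorem weighted_orthogonality_transfer (N i j : ℕ) (hji : j < i) (hiN : i ≤ N)
    (p : Polynomial ℝ)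
    (horth : ∀ r : Polynomial ℝ, r.degree < (i : ℕ) →
      ∫ c in (-1 : ℝ)..1, ((1 - c) / 2) ^ (2 * N + 3 - 2 * i) * p.eval c * r.eval c = 0) :
    ∀ q : Polynomial ℝ, q.degree ≤ (j : ℕ) →
      ∫ c in (-1 : ℝ)..1,
        ((1 - c) / 2) ^ (2 + (N - i) + (N - j)) * p.eval c * q.eval c = 0 := by
  intro q hq
  -- the surplus weight `((1 - c) / 2) ^ (i - j - 1)` is absorbed into the test polynomial
  have hexp : 2 + (N - i) + (N - j) = (2 * N + 3 - 2 * i) + (i - j - 1) := by omega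
  have hs : ((C (1 / 2 : ℝ) * (1 - X)) ^ (i - j - 1)).degree ≤ ((i - j - 1 : ℕ) : WithBot ℕ) := by
    compute_degree
    exact le_rfl
  rw [← integral_mul_eval_mul_eq_zero_of_forall_degree_lt horth hs hq (by omega)]
  refine intervalIntegral.integral_congr fun c _ ↦ ?_
  simp only [hexp, pow_add, eval_pow, eval_mul, eval_C, eval_sub, eval_one, eval_X]
  ring
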